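/- arXiv:1701.08384 — 2 statements merged into one kernel-verified Lean document; each statement's English description precedes it below -/
import Mathlib

section
/- Let S ⊆ D_{2n} be a generating set with e ∉ S = S^{-1} and |S| ≥ 4. Then the metric dimension of the Cayley graph Cay(D_{2n}, S) is at least 3. -/
open SimpleGraph

/-- `W` is a resolving set for `G`. -/
def IsResolving {V : Type*} (G : SimpleGraph V) (W : Set V) : Prop :=
  ∀ u v : V, (∀ w ∈ W, G.dist u w = G.dist v w) → u = v

/-- The metric dimension of `G`: minimum cardinality of a resolving set. -/
noncomputable def metricDim {V : Type*} (G : SimpleGraph V) : ℕ :=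
  sInf {n | ∃ W : Set V, W.ncard = n ∧ IsResolving G W}

/-- The Cayley graph of a group `G` with connection set `S`
(for `S` symmetric and not containing `1`, `u ~ v ↔ u * v⁻¹ ∈ S`). -/
def cayley {G : Type*} [Group G] (S : Set G) : SimpleGraph G :=
  SimpleGraph.fromRel (fun u v => u * v⁻¹ ∈ S)

/-- The rotation `a` in the dihedral group `D_{2n}`. -/
def A (n : ℕ) : DihedralGroup n := DihedralGroup.r 1

/-- The reflection `b` in the dihedral group `D_{2n}`. -/
def B (n : ℕ) : DihedralGroup n := DihedralGroup.sr 0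

/-!
Every neighbour `x` of a landmark `w₁` has `d(x, w₁) = 1` and, by the triangle inequality,
`d(x, w₂) ∈ [d(w₁, w₂) - 1, d(w₁, w₂) + 1]` for any other landmark `w₂`. So at most three
neighbours of `w₁` are told apart by a set of at most two landmarks containing `w₁`, while every
vertex of `Cay(G, S)` has `|S| ≥ 4` neighbours.
-/

theorem Set.exists_subset_pair_of_ncard_le_two {α : Type*} [Nonempty α] {s : Set α}
    (hs : s.Finite) (h : s.ncard ≤ 2) : ∃ a b : α, s ⊆ {a, b} := by
  obtain h0 | h1 | h2 : s.ncard = 0 ∨ s.ncard = 1 ∨ s.ncard = 2 := by omega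
  · obtain ⟨a⟩ := ‹Nonempty α›
    exact ⟨a, a, by simp [(Set.ncard_eq_zero hs).mp h0]⟩
  · obtain ⟨a, rfl⟩ := Set.ncard_eq_one.mp h1
    exact ⟨a, a, by simp⟩
  · obtain ⟨a, b, -, rfl⟩ := Set.ncard_eq_two.mp h2
    exact ⟨a, b, subset_rfl⟩

namespace SimpleGraph

variable {V : Type*} {G : SimpleGraph V}

lemma Connected.isResolving_univ (hG : G.Connected) : IsResolving G Set.univ := fun u _ h =>
  (hG.dist_eq_zero_iff.mp ((h u trivial).symm.trans G.dist_self)).symm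

lemma Connected.le_metricDim {k : ℕ} (hG : G.Connected)
    (h : ∀ W, IsResolving G W → k ≤ W.ncard) : k ≤ metricDim G :=
  le_csInf ⟨_, Set.univ, rfl, hG.isResolving_univ⟩ fun _ ⟨W, hW, hres⟩ => hW ▸ h W hres

lemma IsResolving.ncard_neighborSet_le_three (hG : G.Connected) {W : Set V}
    (hW : IsResolving G W) {w₁ w₂ : V} (hsub : W ⊆ {w₁, w₂}) :
    (G.neighborSet w₁).ncard ≤ 3 := by
  set d := G.dist w₁ w₂
  have hdist_one : ∀ x ∈ G.neighborSet w₁, G.dist x w₁ = 1 := fun x hx =>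
    dist_eq_one_iff_adj.mpr hx.symm
  calc (G.neighborSet w₁).ncard ≤ (Set.Icc (d - 1) (d + 1)).ncard := by
        refine Set.ncard_le_ncard_of_injOn (G.dist · w₂) (fun x hx => ?_) (fun x hx y hy hxy => ?_)
        · have h₁ : G.dist x w₂ ≤ G.dist x w₁ + d := hG.dist_triangle
          have h₂ : d ≤ G.dist x w₁ + G.dist x w₂ := G.dist_comm (u := w₁) ▸ hG.dist_triangle
          have hx₁ := hdist_one x hx
          simp only [Set.mem_Icc]
          omega
        · refine hW x y fun w hw => ?_
          rcases hsub hw with rfl | rfl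
          · rw [hdist_one x hx, hdist_one y hy]
          · exact hxy
    _ ≤ 3 := by simp only [Set.ncard_Icc_nat]; omega

lemma three_le_ncard_of_isResolving [Finite V] (hG : G.Connected)
    (hdeg : ∀ v, 4 ≤ (G.neighborSet v).ncard) {W : Set V} (hW : IsResolving G W) :
    3 ≤ W.ncard := by
  by_contra! hlt
  have : Nonempty V := hG.nonempty
  obtain ⟨w₁, w₂, hsub⟩ := Set.exists_subset_pair_of_ncard_le_two W.toFinite (by omega)
  have := hW.ncard_neighborSet_le_three hG hsub
  have := hdeg w₁
  omega

end SimpleGraph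

section Cayley

variable {G : Type*} [Group G] {S : Set G}

lemma cayley_adj_mul_left (he : (1 : G) ∉ S) {s : G} (hs : s ∈ S) (v : G) :
    (cayley S).Adj (s * v) v := by
  refine (fromRel_adj _ _ _).mpr ⟨fun h => he ?_, Or.inl (by simpa using hs)⟩
  rwa [← mul_eq_right.mp h]

def cayleyMulRight (S : Set G) (g : G) : cayley S →g cayley S where
  toFun x := x * g
  map_rel' {u v} h := by
    rw [cayley, fromRel_adj] at h ⊢
    simpa only [mul_inv_rev, mul_assoc, mul_inv_cancel_left, ne_eq, mul_left_inj] using h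

lemma cayley_connected_of_closure_eq_top (hgen : Subgroup.closure S = ⊤)
    (he : (1 : G) ∉ S) : (cayley S).Connected := by
  have hreach : ∀ g : G, (cayley S).Reachable 1 g := by
    intro g
    have hg : g ∈ Subgroup.closure S := hgen ▸ Subgroup.mem_top g
    induction hg using Subgroup.closure_induction with
    | mem x hx => simpa using (cayley_adj_mul_left he hx 1).symm.reachable
    | one => exact Reachable.refl _
    | mul x y _ _ ihx ihy =>
      have hxy : (cayley S).Reachable (1 * y) (x * y) := ihx.map (cayleyMulRight S y)
      exact ihy.trans (by rwa [one_mul] at hxy)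
    | inv x _ ihx =>
      have hx : (cayley S).Reachable (1 * x⁻¹) (x * x⁻¹) := ihx.map (cayleyMulRight S x⁻¹)
      simpa using hx.symm
  have : Nonempty G := ⟨1⟩
  exact ⟨fun u v => (hreach u).symm.trans (hreach v)⟩

lemma ncard_le_ncard_neighborSet_cayley [Finite G] (he : (1 : G) ∉ S) (v : G) :
    S.ncard ≤ ((cayley S).neighborSet v).ncard := by
  rw [← Set.ncard_image_of_injective S (mul_left_injective v)]
  refine Set.ncard_le_ncard ?_
  rintro _ ⟨s, hs, rfl⟩
  exact (cayley_adj_mul_left he hs v).symm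

end Cayley

theorem stmt_10_general (n : ℕ) (hn : 1 ≤ n) (S : Set (DihedralGroup n))
    (hgen : Subgroup.closure S = ⊤) (he : (1 : DihedralGroup n) ∉ S)
    (hcard : 4 ≤ S.ncard) :
    3 ≤ metricDim (cayley S) := by
  have : NeZero n := ⟨by omega⟩
  have hconn := cayley_connected_of_closure_eq_top hgen he
  exact hconn.le_metricDim fun W hW => three_le_ncard_of_isResolving hconn
    (fun v => hcard.trans (ncard_le_ncard_neighborSet_cayley he v)) hW

theorem stmt_10 (n : ℕ) (hn : 1 ≤ n) (S : Set (DihedralGroup n))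
    (hgen : Subgroup.closure S = ⊤) (he : (1 : DihedralGroup n) ∉ S)
    (hsymm : S⁻¹ = S) (hcard : 4 ≤ S.ncard) :
    3 ≤ metricDim (cayley S) :=
  stmt_10_general n hn S hgen he hcard
end

section
/- Let n ≡ 2 (mod 4), n ≥ 6, and let x = a^i·b, y = a^j·b in D_{2n} with the order of xy equal to n/2 and with {a^{n/2}, x, y} generating D_{2n}. Then Cay(D_{2n}, {a^{n/2}, x, y}) is isomorphic to the prism P_2 × C_n. -/
/-!
Put `z = a^{n/2}`; since `x`, `y`, `z` are involutions and `z` is central, left multiplication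
by `y` and `x` alternately walks along `1, y, xy, yxy, (xy)², …`, a walk that closes up after
`n = 2 · ord(xy)` steps, while multiplication by `z` swaps it with its `z`-translate. This gives a
map from `P₂ × Cₙ` to `D_{2n}` that sends edges to Cayley edges and whose image is closed under
left multiplication by the generators, hence is onto. Both sides have `2n` elements, so the map is
a bijection; by injectivity every Cayley neighbour `s · f b` of `f b` is then the image of a
prism neighbour of `b`, so the bijection is a graph isomorphism.
-/

open SimpleGraph

section Cayley

variable {V G : Type*} [Group G] {S : Set G}

lemma cayley_adj_iff {u v : G} :
    (cayley S).Adj u v ↔ u ≠ v ∧ (u * v⁻¹ ∈ S ∨ v * u⁻¹ ∈ S) :=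
  fromRel_adj ..

lemma surjective_of_mul_mem_range (hS : Subgroup.closure S = ⊤) (hinv : ∀ s ∈ S, s⁻¹ ∈ S)
    {f : V → G} (hone : 1 ∈ Set.range f) (hmul : ∀ s ∈ S, ∀ v, s * f v ∈ Set.range f) :
    Function.Surjective f := by
  have hclosure : ∀ g ∈ Subgroup.closure S, ∀ v, g * f v ∈ Set.range f := by
    intro g hg
    induction hg using Subgroup.closure_induction'' with
    | mem s hs => exact hmul s hs
    | inv_mem s hs => exact hmul s⁻¹ (hinv s hs)
    | one => simp
    | mul g h _ _ hg hh =>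
      intro v
      obtain ⟨w, hw⟩ := hh v
      rw [mul_assoc, ← hw]
      exact hg w
  obtain ⟨v, hv⟩ := hone
  intro g
  simpa [hv] using hclosure g (hS ▸ Subgroup.mem_top g) v

lemma nonempty_cayley_iso_of_forall_adj {H : SimpleGraph V} (f : V ≃ G)
    (hadj : ∀ a b, H.Adj a b → ∃ s ∈ S, f a = s * f b)
    (hnbr : ∀ b, ∀ s ∈ S, ∃ a, H.Adj a b ∧ f a = s * f b) :
    Nonempty (cayley S ≃g H) := by
  refine ⟨(RelIso.mk f fun {a b} => ?_).symm⟩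
  rw [cayley_adj_iff]
  constructor
  · rintro ⟨-, h | h⟩
    · obtain ⟨c, hc, hfc⟩ := hnbr b _ h
      rw [inv_mul_cancel_right, f.apply_eq_iff_eq] at hfc
      exact hfc ▸ hc
    · obtain ⟨c, hc, hfc⟩ := hnbr a _ h
      rw [inv_mul_cancel_right, f.apply_eq_iff_eq] at hfc
      exact (hfc ▸ hc).symm
  · intro h
    obtain ⟨s, hs, hfs⟩ := hadj a b h
    refine ⟨f.injective.ne h.ne, Or.inl ?_⟩
    rwa [hfs, mul_inv_cancel_right]

end Cayley

lemma cycleGraph_adj_iff {n : ℕ} [NeZero n] (hn : 1 < n) {u v : Fin n} :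
    (cycleGraph n).Adj u v ↔ u = v + 1 ∨ v = u + 1 := by
  obtain ⟨n, rfl⟩ : ∃ m, n = m + 2 := ⟨n - 2, by omega⟩
  rw [cycleGraph_adj, sub_eq_iff_eq_add, sub_eq_iff_eq_add, add_comm 1, add_comm 1]

lemma Fin.even_val_add_one_iff {n : ℕ} [NeZero n] (hn : Even n) (k : Fin n) :
    Even (k + 1).val ↔ ¬Even k.val := by
  rw [Fin.val_add, Fin.val_one', Nat.add_mod_mod, Nat.even_iff,
    Nat.mod_mod_of_dvd _ (even_iff_two_dvd.mp hn), ← Nat.even_iff, Nat.even_add_one]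

section Zigzag

variable {G : Type*} {x y z : G}

variable (x y) in
def zigzagStep (k : ℕ) : G := if Even k then y else x

lemma zigzagStep_mem (k : ℕ) : zigzagStep x y k ∈ ({z, x, y} : Set G) := by
  unfold zigzagStep; split_ifs <;> simp

lemma commute_zigzagStep [Mul G] (hzx : Commute z x) (hzy : Commute z y) (k : ℕ) :
    Commute z (zigzagStep x y k) := by
  unfold zigzagStep; split_ifs <;> assumption

lemma zigzagStep_mul_self [Mul G] [One G] (hx : x * x = 1) (hy : y * y = 1) (k : ℕ) :
    zigzagStep x y k * zigzagStep x y k = 1 := by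
  unfold zigzagStep; split_ifs <;> assumption

lemma eq_zigzagStep_or_eq_zigzagStep_val_sub_one {n : ℕ} [NeZero n] (hn : Even n) (k : Fin n)
    {s : G} (hs : s = x ∨ s = y) :
    s = zigzagStep x y k.val ∨ s = zigzagStep x y (k - 1).val := by
  have hpar := Fin.even_val_add_one_iff hn (k - 1)
  rw [sub_add_cancel] at hpar
  unfold zigzagStep
  split_ifs <;> tauto

variable [Group G]

variable (x y) in
def zigzag (k : ℕ) : G := (if Even k then 1 else y) * (x * y) ^ (k / 2)

variable (x y) in
lemma zigzag_succ (k : ℕ) : zigzag x y (k + 1) = zigzagStep x y k * zigzag x y k := by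
  obtain ⟨s, rfl | rfl⟩ := Nat.even_or_odd' k
  · rw [zigzag, zigzag, show (2 * s + 1) / 2 = s by omega]
    simp [zigzagStep]
  · rw [zigzag, zigzag, show (2 * s + 1 + 1) / 2 = s + 1 by omega,
      show (2 * s + 1) / 2 = s by omega]
    simp [zigzagStep, Nat.even_add_one, pow_succ', mul_assoc]

lemma zigzag_periodic {n : ℕ} (hn : Even n) (hxy : (x * y) ^ (n / 2) = 1) :
    Function.Periodic (zigzag x y) n := by
  obtain ⟨m, rfl⟩ := hn
  rw [show (m + m) / 2 = m by omega] at hxy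
  intro k
  rw [zigzag, zigzag, show (k + (m + m)) / 2 = k / 2 + m by omega, pow_add, hxy, mul_one]
  simp [Nat.even_add]

lemma zigzag_val_add_one {n : ℕ} [NeZero n] (hn : Even n) (hxy : (x * y) ^ (n / 2) = 1)
    (k : Fin n) : zigzag x y (k + 1).val = zigzagStep x y k.val * zigzag x y k.val := by
  rw [Fin.val_add, Fin.val_one', Nat.add_mod_mod, (zigzag_periodic hn hxy).map_mod_nat,
    zigzag_succ]

end Zigzag

section Prism

variable {G : Type*} [Group G] {x y z : G} {n : ℕ}

def prismMap (z x y : G) (v : Fin 2 × Fin n) : G := z ^ v.1.val * zigzag x y v.2.val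

lemma prismMap_add_one_fst (hz : z * z = 1) (ε : Fin 2) (k : Fin n) :
    prismMap z x y (ε + 1, k) = z * prismMap z x y (ε, k) := by
  fin_cases ε <;> simp [prismMap, ← mul_assoc, hz]

variable [NeZero n]

lemma prismMap_add_one_snd (hn : Even n) (hxy : (x * y) ^ (n / 2) = 1) (hzx : Commute z x)
    (hzy : Commute z y) (ε : Fin 2) (k : Fin n) :
    prismMap z x y (ε, k + 1) = zigzagStep x y k.val * prismMap z x y (ε, k) := by
  simp only [prismMap]
  rw [zigzag_val_add_one hn hxy, ← mul_assoc, ← mul_assoc,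
    ((commute_zigzagStep hzx hzy _).pow_left _).eq]

lemma prismMap_sub_one_snd (hn : Even n) (hxy : (x * y) ^ (n / 2) = 1) (hzx : Commute z x)
    (hzy : Commute z y) (hx : x * x = 1) (hy : y * y = 1) (ε : Fin 2) (k : Fin n) :
    prismMap z x y (ε, k - 1) = zigzagStep x y (k - 1).val * prismMap z x y (ε, k) := by
  have h := prismMap_add_one_snd hn hxy hzx hzy ε (k - 1)
  rw [sub_add_cancel] at h
  rw [h, ← mul_assoc, zigzagStep_mul_self hx hy, one_mul]

lemma exists_mem_prismMap_eq_mul_of_adj (hn : Even n) (hxy : (x * y) ^ (n / 2) = 1)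
    (hz : z * z = 1) (hx : x * x = 1) (hy : y * y = 1) (hzx : Commute z x) (hzy : Commute z y)
    {a b : Fin 2 × Fin n} (h : (pathGraph 2 □ cycleGraph n).Adj a b) :
    ∃ s ∈ ({z, x, y} : Set G), prismMap z x y a = s * prismMap z x y b := by
  obtain ⟨ε, k⟩ := a
  obtain ⟨ε', k'⟩ := b
  simp only [boxProd_adj, pathGraph_two_eq_top, top_adj,
    cycleGraph_adj_iff (Nat.one_lt_of_ne_zero_of_even (NeZero.ne n) hn)] at h
  rcases h with ⟨hε, rfl⟩ | ⟨rfl | rfl, rfl⟩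
  · obtain rfl : ε = ε' + 1 := by fin_cases ε <;> fin_cases ε' <;> simp_all
    exact ⟨z, by simp, prismMap_add_one_fst hz ε' k⟩
  · exact ⟨_, zigzagStep_mem _, prismMap_add_one_snd hn hxy hzx hzy _ k'⟩
  · refine ⟨_, zigzagStep_mem k.val, ?_⟩
    simpa using prismMap_sub_one_snd hn hxy hzx hzy hx hy _ (k + 1)

lemma exists_adj_prismMap_eq_mul (hn : Even n) (hxy : (x * y) ^ (n / 2) = 1)
    (hz : z * z = 1) (hx : x * x = 1) (hy : y * y = 1) (hzx : Commute z x) (hzy : Commute z y)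
    (b : Fin 2 × Fin n) {s : G} (hs : s ∈ ({z, x, y} : Set G)) :
    ∃ a, (pathGraph 2 □ cycleGraph n).Adj a b ∧ prismMap z x y a = s * prismMap z x y b := by
  obtain ⟨ε, k⟩ := b
  simp only [boxProd_adj, pathGraph_two_eq_top, top_adj,
    cycleGraph_adj_iff (Nat.one_lt_of_ne_zero_of_even (NeZero.ne n) hn)]
  rcases hs with rfl | hs
  · exact ⟨(ε + 1, k), Or.inl ⟨by simp, rfl⟩, prismMap_add_one_fst hz ε k⟩
  rcases eq_zigzagStep_or_eq_zigzagStep_val_sub_one hn k hs with rfl | rfl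
  · exact ⟨(ε, k + 1), Or.inr ⟨Or.inl rfl, rfl⟩, prismMap_add_one_snd hn hxy hzx hzy ε k⟩
  · exact ⟨(ε, k - 1), Or.inr ⟨Or.inr (sub_add_cancel k 1).symm, rfl⟩,
      prismMap_sub_one_snd hn hxy hzx hzy hx hy ε k⟩

theorem nonempty_cayley_iso_prism (hn : Even n) (hxy : (x * y) ^ (n / 2) = 1)
    (hz : z * z = 1) (hx : x * x = 1) (hy : y * y = 1) (hzx : Commute z x) (hzy : Commute z y)
    (hgen : Subgroup.closure ({z, x, y} : Set G) = ⊤) (hcard : Nat.card G = 2 * n) :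
    Nonempty (cayley ({z, x, y} : Set G) ≃g (pathGraph 2 □ cycleGraph n)) := by
  have hinv : ∀ s ∈ ({z, x, y} : Set G), s⁻¹ ∈ ({z, x, y} : Set G) := by
    intro s hs
    have hss : s * s = 1 := by rcases hs with rfl | rfl | rfl <;> assumption
    rwa [inv_eq_of_mul_eq_one_right hss]
  have hsurj : Function.Surjective (prismMap z x y (n := n)) :=
    surjective_of_mul_mem_range hgen hinv ⟨(0, 0), by simp [prismMap, zigzag]⟩
      fun s hs v => (exists_adj_prismMap_eq_mul hn hxy hz hx hy hzx hzy v hs).imp fun _ => And.right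
  have hbij := hsurj.bijective_of_nat_card_le (by simp [hcard])
  exact nonempty_cayley_iso_of_forall_adj (Equiv.ofBijective _ hbij)
    (fun _ _ => exists_mem_prismMap_eq_mul_of_adj hn hxy hz hx hy hzx hzy)
    (fun b _ => exists_adj_prismMap_eq_mul hn hxy hz hx hy hzx hzy b)

end Prism

namespace DihedralGroup

variable {n : ℕ}

lemma A_zpow_mul_B (i : ℤ) : A n ^ i * B n = sr (-(i : ZMod n)) := by
  rw [A, B, r_one_zpow, r_mul_sr, zero_sub]

lemma A_pow_half_mul_self (hn : Even n) : A n ^ (n / 2) * A n ^ (n / 2) = 1 := by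
  rw [← pow_add, ← two_mul, Nat.two_mul_div_two_of_even hn, A, r_one_pow_n]

lemma commute_A_pow_half_sr (hn : Even n) (c : ZMod n) : Commute (A n ^ (n / 2)) (sr c) := by
  have hhalf : ((n / 2 : ℕ) : ZMod n) + (n / 2 : ℕ) = 0 := by
    rw [← Nat.cast_add, ← two_mul, Nat.two_mul_div_two_of_even hn, ZMod.natCast_self]
  rw [A, r_one_pow, Commute, SemiconjBy, r_mul_sr, sr_mul_r, sr.injEq]
  linear_combination -hhalf

end DihedralGroup

theorem stmt_16_general (n : ℕ) (hmod : n % 4 = 2) (i j : ℤ)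
    (x y : DihedralGroup n) (hx : x = A n ^ i * B n) (hy : y = A n ^ j * B n)
    (hord : orderOf (x * y) = n / 2)
    (hgen : Subgroup.closure ({A n ^ (n / 2), x, y} : Set (DihedralGroup n)) = ⊤) :
    Nonempty (cayley ({A n ^ (n / 2), x, y} : Set (DihedralGroup n)) ≃g
      (pathGraph 2 □ cycleGraph n)) := by
  have : NeZero n := ⟨by omega⟩
  have heven : Even n := Nat.even_iff.mpr (by omega)
  rw [DihedralGroup.A_zpow_mul_B] at hx hy
  subst hx hy
  exact nonempty_cayley_iso_prism heven (hord ▸ pow_orderOf_eq_one _)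
    (DihedralGroup.A_pow_half_mul_self heven) (DihedralGroup.sr_mul_self _)
    (DihedralGroup.sr_mul_self _) (DihedralGroup.commute_A_pow_half_sr heven _)
    (DihedralGroup.commute_A_pow_half_sr heven _) hgen DihedralGroup.nat_card

theorem stmt_16 (n : ℕ) (hmod : n % 4 = 2) (hn : 6 ≤ n) (i j : ℤ)
    (x y : DihedralGroup n) (hx : x = A n ^ i * B n) (hy : y = A n ^ j * B n)
    (hord : orderOf (x * y) = n / 2)
    (hgen : Subgroup.closure ({A n ^ (n / 2), x, y} : Set (DihedralGroup n)) = ⊤) :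
    Nonempty (cayley ({A n ^ (n / 2), x, y} : Set (DihedralGroup n)) ≃g
      (pathGraph 2 □ cycleGraph n)) :=
  stmt_16_general n hmod i j x y hx hy hord hgen
end
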